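/- Let M > 0 and let E, F ≥ 0 be real numbers with |2F − E| ≤ 1 and E > 1. Then for every continuously differentiable f : [2M, ∞) → ℝ satisfying ∫_{2M}^{∞} ( s² f′(s)² + f(s)² ) ds < ∞, one has ∫_{2M}^{∞} [ s(s − 2M) f′(s)² + ( (E² − 1)/4 − 2MF²/s ) f(s)² ] ds ≥ 0. -/

import Mathlib

/-!
Put `r = 2M` and `a = (1 + E)/2`, so that `a² - a = (E² - 1)/4` and `F² ≤ a²`. The multiplier
`g(s) = a (s - r) f(s)²` completes the square in the integrand `I`:
`s (s - r) (I + g') = (s (s - r) f' + a (s - r) f)² + r (a² - F²) (s - r) f² ≥ 0`.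
As `g'` is integrable, `g` has a limit at `∞`; it vanishes since `g(s)/s` is integrable
while `1/s` is not. With `g(r) = 0` this gives `∫ g' = 0`, hence `∫ I = ∫ (I + g') ≥ 0`.
-/

open MeasureTheory Set Filter Topology Asymptotics

theorem eq_zero_of_tendsto_of_integrableOn_div {φ : ℝ → ℝ} {L c : ℝ}
    (hφ : Tendsto φ atTop (𝓝 L)) (hint : IntegrableOn (fun x => φ x / x) (Ioi c)) :
    L = 0 := by
  by_contra hL
  have hinv : (fun x : ℝ => x⁻¹) =O[atTop] fun x => φ x / x := by
    have h := (isBigO_refl (fun x => φ x / x) atTop).mul ((hφ.inv₀ hL).isBigO_one ℝ)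
    refine h.congr' ?_ (.of_forall fun x => mul_one _)
    filter_upwards [hφ.eventually_ne hL] with x hx
    field_simp
  obtain ⟨a, ha⟩ := integrableAtFilter_atTop_iff.1 <|
    hinv.integrableAtFilter ⟨univ, univ_mem, measurable_inv.aestronglyMeasurable.restrict⟩
      ⟨Ioi c, Ioi_mem_atTop c, hint⟩
  exact not_integrableOn_Ici_inv ha

theorem integral_Ioi_of_hasDerivAt_of_integrableOn_div {g g' : ℝ → ℝ} {r : ℝ}
    (hcont : ContinuousWithinAt g (Ici r) r) (hderiv : ∀ x ∈ Ioi r, HasDerivAt g (g' x) x)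
    (hg' : IntegrableOn g' (Ioi r)) (hdiv : IntegrableOn (fun x => g x / x) (Ioi r)) :
    ∫ x in Ioi r, g' x = -g r := by
  have hlim := tendsto_limUnder_of_hasDerivAt_of_integrableOn_Ioi hderiv hg'
  rw [eq_zero_of_tendsto_of_integrableOn_div hlim hdiv] at hlim
  rw [integral_Ioi_of_hasDerivAt_of_tendsto hcont hderiv hg' hlim, zero_sub]

theorem HasDerivAt.affine_mul_sq {f : ℝ → ℝ} {f' x : ℝ} (hf : HasDerivAt f f' x)
    (a r : ℝ) :
    HasDerivAt (fun s => a * (s - r) * f s ^ 2) (a * f x ^ 2 + a * (x - r) * (2 * f x * f')) x :=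
  ((((hasDerivAt_id x).sub_const r).const_mul a).mul (hf.pow 2)).congr_deriv (by simp)

section WeightedIntegrability

variable {f : ℝ → ℝ} {r : ℝ}

theorem integrableOn_deriv_affine_mul_sq (a : ℝ) (hr : 0 ≤ r) (hf : ContinuousOn f (Ioi r))
    (hD : IntegrableOn (fun s => s ^ 2 * deriv f s ^ 2 + f s ^ 2) (Ioi r)) :
    IntegrableOn (fun s => a * f s ^ 2 + a * (s - r) * (2 * f s * deriv f s)) (Ioi r) := by
  refine (hD.const_mul (2 * |a|)).mono' ?_ ?_
  · have hmf : AEStronglyMeasurable f (volume.restrict (Ioi r)) :=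
      hf.aestronglyMeasurable measurableSet_Ioi
    have hmd : AEStronglyMeasurable (deriv f) (volume.restrict (Ioi r)) :=
      (measurable_deriv f).aestronglyMeasurable
    fun_prop
  · filter_upwards [ae_restrict_mem measurableSet_Ioi] with s (hs : r < s)
    have hsq : (s - r) ^ 2 ≤ s ^ 2 := by nlinarith
    have hbound : |f s ^ 2 + (s - r) * (2 * f s * deriv f s)|
        ≤ 2 * (s ^ 2 * deriv f s ^ 2 + f s ^ 2) := by
      rw [abs_le]
      constructor <;> nlinarith [sq_nonneg ((s - r) * deriv f s + f s),
        sq_nonneg ((s - r) * deriv f s - f s),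
        mul_le_mul_of_nonneg_right hsq (sq_nonneg (deriv f s))]
    calc ‖a * f s ^ 2 + a * (s - r) * (2 * f s * deriv f s)‖
        = |a| * |f s ^ 2 + (s - r) * (2 * f s * deriv f s)| := by
          rw [Real.norm_eq_abs, ← abs_mul, mul_add, mul_assoc a]
      _ ≤ |a| * (2 * (s ^ 2 * deriv f s ^ 2 + f s ^ 2)) := by gcongr
      _ = 2 * |a| * (s ^ 2 * deriv f s ^ 2 + f s ^ 2) := by ring

theorem integrableOn_affine_mul_sq_div (a : ℝ) (hr : 0 ≤ r) (hf : ContinuousOn f (Ioi r))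
    (hf2 : IntegrableOn (fun s => f s ^ 2) (Ioi r)) :
    IntegrableOn (fun s => a * (s - r) * f s ^ 2 / s) (Ioi r) := by
  refine (hf2.const_mul |a|).mono' ?_ ?_
  · refine ContinuousOn.aestronglyMeasurable ?_ measurableSet_Ioi
    exact ((continuousOn_const.mul (continuousOn_id.sub continuousOn_const)).mul (hf.pow 2)).div
      continuousOn_id fun s (hs : r < s) => by linarith
  · filter_upwards [ae_restrict_mem measurableSet_Ioi] with s (hs : r < s)
    have hs0 : 0 < s := by linarith
    rw [Real.norm_eq_abs, abs_div, abs_mul, abs_mul, abs_of_pos hs0, abs_of_pos (sub_pos.2 hs),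
      abs_sq, div_le_iff₀ hs0]
    have : 0 ≤ |a| * f s ^ 2 := by positivity
    nlinarith

theorem integral_deriv_affine_mul_sq_eq_zero (a : ℝ) (hr : 0 ≤ r) (hf : ContinuousOn f (Ici r))
    (hfd : ∀ s ∈ Ioi r, HasDerivAt f (deriv f s) s)
    (hD : IntegrableOn (fun s => s ^ 2 * deriv f s ^ 2 + f s ^ 2) (Ioi r)) :
    ∫ s in Ioi r, (a * f s ^ 2 + a * (s - r) * (2 * f s * deriv f s)) = 0 := by
  have hfc : ContinuousOn f (Ioi r) := hf.mono Ioi_subset_Ici_self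
  have hf2 : IntegrableOn (fun s => f s ^ 2) (Ioi r) :=
    hD.mono' ((hfc.aestronglyMeasurable measurableSet_Ioi).pow 2) <| .of_forall fun s => by
      simp only [norm_pow, Real.norm_eq_abs, sq_abs]; nlinarith [sq_nonneg (s * deriv f s)]
  have hgc : ContinuousOn (fun s => a * (s - r) * f s ^ 2) (Ici r) := by fun_prop
  rw [integral_Ioi_of_hasDerivAt_of_integrableOn_div (hgc r self_mem_Ici)
    (fun s hs => (hfd s hs).affine_mul_sq a r) (integrableOn_deriv_affine_mul_sq a hr hfc hD)
    (integrableOn_affine_mul_sq_div a hr hfc hf2)]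
  simp

end WeightedIntegrability

theorem hardy_integrand_add_deriv_nonneg {r a F s : ℝ} (p q : ℝ) (hr : 0 ≤ r) (hrs : r < s)
    (hFa : F ^ 2 ≤ a ^ 2) :
    0 ≤ s * (s - r) * p ^ 2 + (a ^ 2 - a - r * F ^ 2 / s) * q ^ 2
      + (a * q ^ 2 + a * (s - r) * (2 * q * p)) := by
  have hs : s ≠ 0 := by linarith
  have hw : 0 < s * (s - r) := mul_pos (by linarith) (by linarith)
  have key : s * (s - r) * (s * (s - r) * p ^ 2 + (a ^ 2 - a - r * F ^ 2 / s) * q ^ 2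
      + (a * q ^ 2 + a * (s - r) * (2 * q * p)))
      = (s * (s - r) * p + a * (s - r) * q) ^ 2 + r * (a ^ 2 - F ^ 2) * (s - r) * q ^ 2 := by
    field_simp
    ring
  refine nonneg_of_mul_nonneg_right ?_ hw
  rw [key]
  have : 0 ≤ r * (a ^ 2 - F ^ 2) * (s - r) :=
    mul_nonneg (mul_nonneg hr (sub_nonneg.2 hFa)) (by linarith)
  positivity

theorem hardy_inequality_halfline
    (M E F : ℝ) (hM : 0 < M)
    (hE0 : 0 ≤ E)
    (hEF : |2*F - E| ≤ 1)
    (f : ℝ → ℝ) (hf : ContDiffOn ℝ 1 f (Ici (2*M)))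
    (hfin : IntegrableOn (fun s => s^2 * (deriv f s)^2 + (f s)^2) (Ici (2*M))) :
    0 ≤ ∫ s in Ici (2*M),
      (s*(s - 2*M) * (deriv f s)^2 + ((E^2 - 1)/4 - 2*M*F^2/s) * (f s)^2) := by
  set r := 2 * M
  set a := (1 + E) / 2 with ha
  have hr : 0 ≤ r := by positivity
  have hFa : F ^ 2 ≤ a ^ 2 := by
    obtain ⟨h₁, h₂⟩ := abs_le.1 hEF
    rw [ha]
    exact sq_le_sq' (by linarith) (by linarith)
  have hEa : (E ^ 2 - 1) / 4 = a ^ 2 - a := by ring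
  have hfd (s : ℝ) (hs : s ∈ Ioi r) : HasDerivAt f (deriv f s) s :=
    (hf.differentiableOn one_ne_zero s (Ioi_subset_Ici_self hs)).differentiableAt
      (Ici_mem_nhds hs) |>.hasDerivAt
  have hD := hfin.mono_set Ioi_subset_Ici_self
  have hg'int := integrableOn_deriv_affine_mul_sq a hr (hf.continuousOn.mono Ioi_subset_Ici_self) hD
  have hg'zero := integral_deriv_affine_mul_sq_eq_zero a hr hf.continuousOn hfd hD
  rw [integral_Ici_eq_integral_Ioi, hEa]
  by_cases hI : IntegrableOn
    (fun s => s * (s - r) * deriv f s ^ 2 + (a ^ 2 - a - r * F ^ 2 / s) * f s ^ 2) (Ioi r)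
  · calc 0 ≤ ∫ s in Ioi r, (s * (s - r) * deriv f s ^ 2 + (a ^ 2 - a - r * F ^ 2 / s) * f s ^ 2
            + (a * f s ^ 2 + a * (s - r) * (2 * f s * deriv f s))) :=
          setIntegral_nonneg measurableSet_Ioi fun s hs =>
            hardy_integrand_add_deriv_nonneg _ _ hr hs hFa
      _ = _ := by rw [integral_add hI hg'int, hg'zero, add_zero]
  · exact (integral_undef hI).ge
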